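/- arXiv:math/0503469 — 4 statements merged into one kernel-verified Lean document; each statement's English description precedes it below -/
import Mathlib

section
/- Let W be a left comodule of an R-coring C, finitely generated projective as a left R-module with dual basis {w_i, χ_i}_{i∈I}, and set e_{ij} = Σ w_i^{(-1)} χ_j(w_i^{(0)}) ∈ C. Then the matrix (e_{ij}) is 'coidempotent': Δ(e_{ij}) = Σ_{k∈I} e_{ik} ⊗_R e_{kj} for all i, j ∈ I. -/
/-!
STATEMENT 5: Let `W` be a left `C`-comodule, finitely generated projective as a
left `R`-module with dual basis `{w_i, χ_i}`, and
`e_{ij} = Σ w_i^{(-1)} χ_j(w_i^{(0)})`.  Then the matrix `(e_{ij})` is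
coidempotent: `Δ(e_{ij}) = Σ_k e_{ik} ⊗_R e_{kj}`.

The tensor products `C ⊗_R C`, `C ⊗_R W` and `C ⊗_R C ⊗_R W` are axiomatised
as `k`-modules `CC`, `CW`, `CCW` with the canonical structure maps; the
coassociativity of the coaction is expressed through the canonical maps
`Δ ⊗ W` and `C ⊗ ρ` into `CCW`.
-/

open MulOpposite

theorem comodule_matrix_coidempotent
    {k R : Type*} [CommRing k] [Ring R] [Algebra k R]
    {C : Type*} [AddCommGroup C] [Module k C] [Module R C] [Module Rᵐᵒᵖ C]
    [IsScalarTower k R C] [IsScalarTower k Rᵐᵒᵖ C] [SMulCommClass R Rᵐᵒᵖ C]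
    {W : Type*} [AddCommGroup W] [Module k W] [Module R W] [IsScalarTower k R W]
    -- CC = C ⊗_R C with its right R-action
    {CC : Type*} [AddCommGroup CC] [Module k CC] [Module Rᵐᵒᵖ CC]
    (tm : C →ₗ[k] C →ₗ[k] CC)
    (htm_bal : ∀ (r : R) (c c' : C), tm (op r • c) c' = tm c (r • c'))
    (htm_right : ∀ (r : R) (c c' : C), op r • tm c c' = tm c (op r • c'))
    -- coproduct, right R-linear
    (Δ : C →ₗ[k] CC)
    (hΔ_right : ∀ (r : R) (c : C), Δ (op r • c) = op r • Δ c)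
    -- CW = C ⊗_R W
    {CW : Type*} [AddCommGroup CW] [Module k CW]
    (tmW : C →ₗ[k] W →ₗ[k] CW)
    (htmW_bal : ∀ (r : R) (c : C) (w : W), tmW (op r • c) w = tmW c (r • w))
    (hspanCW : ∀ x : CW, x ∈ Submodule.span k {y : CW | ∃ c w, y = tmW c w})
    -- CCW = C ⊗_R C ⊗_R W with its two canonical product maps
    {CCW : Type*} [AddCommGroup CCW] [Module k CCW]
    (t1 : CC →ₗ[k] W →ₗ[k] CCW) (t2 : C →ₗ[k] CW →ₗ[k] CCW)
    (ht12 : ∀ (c c' : C) (w : W), t1 (tm c c') w = t2 c (tmW c' w))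
    (hspanCCW : ∀ x : CCW, x ∈ Submodule.span k {y : CCW | ∃ c z, y = t2 c z})
    -- the coaction ρ : W → C ⊗_R W and its coassociativity
    (ρ : W →ₗ[k] CW)
    -- Δ ⊗ W and C ⊗ ρ as maps CW → CCW
    (ρ1 ρ2 : CW →ₗ[k] CCW)
    (hρ1 : ∀ (c : C) (w : W), ρ1 (tmW c w) = t1 (Δ c) w)
    (hρ2 : ∀ (c : C) (w : W), ρ2 (tmW c w) = t2 c (ρ w))
    (hcoassoc : ∀ x : W, ρ1 (ρ x) = ρ2 (ρ x))
    -- evaluation of a functional on the last leg: C ⊗ φ and C ⊗ C ⊗ φ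
    (cev : (W →ₗ[R] R) → (CW →ₗ[k] C))
    (hcev : ∀ (φ : W →ₗ[R] R) (c : C) (w : W), cev φ (tmW c w) = op (φ w) • c)
    (cev2 : (W →ₗ[R] R) → (CCW →ₗ[k] CC))
    (hcev2 : ∀ (φ : W →ₗ[R] R) (x : CC) (w : W), cev2 φ (t1 x w) = op (φ w) • x)
    -- finite dual basis of the left R-module W
    {I : Type*} [Fintype I] (w : I → W) (χ : I → (W →ₗ[R] R))
    (hdb : ∀ x : W, ∑ i, χ i x • w i = x) :
    -- writing e i j := (C ⊗ χ_j)(ρ(w_i)):  Δ(e_{ij}) = Σ_l e_{il} ⊗ e_{lj}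
    ∀ i j : I,
      Δ (cev (χ j) (ρ (w i)))
        = ∑ l : I, tm (cev (χ l) (ρ (w i))) (cev (χ j) (ρ (w l))) := by
  intro i j
  -- Lemma C: cev2 φ (t2 c z) = tm c (cev φ z)
  have lemC : ∀ (φ : W →ₗ[R] R) (c : C) (z : CW), cev2 φ (t2 c z) = tm c (cev φ z) := by
    intro φ c z
    induction hspanCW z using Submodule.span_induction with
    | mem y hy =>
        obtain ⟨c', w', rfl⟩ := hy
        rw [← ht12, hcev2, hcev, htm_right]
    | zero => simp
    | add a b _ _ ha hb => simp [map_add, ha, hb]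
    | smul r a _ ha => simp [map_smul, ha]
  -- Lemma E: Δ ∘ cev φ = cev2 φ ∘ ρ1
  have lemE : ∀ (φ : W →ₗ[R] R) (x : CW), Δ (cev φ x) = cev2 φ (ρ1 x) := by
    intro φ x
    induction hspanCW x using Submodule.span_induction with
    | mem y hy =>
        obtain ⟨c, v, rfl⟩ := hy
        rw [hcev, hρ1, hcev2, hΔ_right]
    | zero => simp
    | add a b _ _ ha hb => simp [map_add, ha, hb]
    | smul r a _ ha => simp [map_smul, ha]
  -- Lemma D
  have lemD : ∀ (φ : W →ₗ[R] R) (x : CW),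
      cev2 φ (ρ2 x) = ∑ l, tm (cev (χ l) x) (cev φ (ρ (w l))) := by
    intro φ x
    induction hspanCW x using Submodule.span_induction with
    | mem y hy =>
        obtain ⟨c, v, rfl⟩ := hy
        have hx : tmW c v = ∑ l, tmW (op (χ l v) • c) (w l) := by
          conv_lhs => rw [← hdb v]
          rw [map_sum]
          exact Finset.sum_congr rfl fun l _ => (htmW_bal _ _ _).symm
        calc cev2 φ (ρ2 (tmW c v))
            = ∑ l, cev2 φ (ρ2 (tmW (op (χ l v) • c) (w l))) := by
              rw [hx, map_sum, map_sum]
          _ = ∑ l, tm (op (χ l v) • c) (cev φ (ρ (w l))) := by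
              refine Finset.sum_congr rfl fun l _ => ?_
              rw [hρ2, lemC]
          _ = ∑ l, tm (cev (χ l) (tmW c v)) (cev φ (ρ (w l))) := by
              simp [hcev]
    | zero => simp
    | add a b _ _ ha hb => simp [map_add, ha, hb, Finset.sum_add_distrib]
    | smul r a _ ha => simp [map_smul, ha, Finset.smul_sum]
  rw [lemE, hcoassoc, lemD]
end

section
/- Let T ⊆ B be k-algebras with B a T-ring, and M a left B-module. There exists a T-connection ∇ : M → Ω¹B ⊗_B M (a k-linear map satisfying the Leibniz rule ∇(bm) = d(b) ⊗ m + b∇(m)) if and only if the left B-multiplication map B ⊗_T M → M has a left B-linear section. (Cuntz–Quillen theorem, relative version.) -/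
/-!
STATEMENT 9 (relative Cuntz–Quillen theorem): Let `B` be a `T`-ring and `M` a
left `B`-module.  There exists a `T`-connection
`∇ : M → Ω¹B ⊗_B M` (a `k`-linear map satisfying the Leibniz rule
`∇(bm) = d(b) ⊗ m + b∇(m)`) if and only if the multiplication map
`B ⊗_T M → M` has a left `B`-linear section.

`B ⊗_T M` is axiomatised as a `k`-module `BM` with a left `B`-action, the
canonical balanced map `tm` and the multiplication map `μ`.  Under the
identification `Ω¹B ⊗_B M ≅ ker(μ : B ⊗_T M → M)`, a connection is a `k`-linear
map `∇ : M → BM` with `μ ∘ ∇ = 0` satisfying the Leibniz rule, where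
`d(b) ⊗_B m = 1 ⊗ bm − b ⊗ m`.
-/

theorem relative_cuntz_quillen
    {k T : Type*} [CommRing k] [Ring T] [Algebra k T]
    {B : Type*} [Ring B] [Algebra k B]
    -- B is a T-ring
    (η : T →ₐ[k] B)
    -- M is a left B-module
    {M : Type*} [AddCommGroup M] [Module k M] [Module B M] [IsScalarTower k B M]
    -- BM plays the role of B ⊗_T M
    {BM : Type*} [AddCommGroup BM] [Module k BM] [Module B BM]
    [IsScalarTower k B BM]
    (tm : B →ₗ[k] M →ₗ[k] BM)
    (htm_bal : ∀ (b : B) (t : T) (m : M), tm (b * η t) m = tm b (η t • m))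
    (htm_left : ∀ (b b' : B) (m : M), b • tm b' m = tm (b * b') m)
    -- μ : B ⊗_T M → M is the multiplication map
    (μ : BM →ₗ[k] M)
    (hμ : ∀ (b : B) (m : M), μ (tm b m) = b • m) :
    -- a T-connection exists iff μ has a left B-linear section
    (∃ conn : M →ₗ[k] BM,
        (∀ m : M, μ (conn m) = 0) ∧
        -- Leibniz rule: ∇(b m) = d(b) ⊗_B m + b ∇(m)
        (∀ (b : B) (m : M),
          conn (b • m) = (tm 1 (b • m) - tm b m) + b • conn m))
    ↔ (∃ σ : M →ₗ[B] BM, ∀ m : M, μ (σ m) = m) := by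
  constructor
  · rintro ⟨conn, h0, hleib⟩
    refine ⟨{ toFun := fun m => tm 1 m - conn m,
              map_add' := by intro x y; simp [map_add]; abel,
              map_smul' := ?_ }, ?_⟩
    · intro b m
      show tm 1 (b • m) - conn (b • m) = b • (tm 1 m - conn m)
      rw [hleib b m, smul_sub, htm_left b 1 m, mul_one]
      abel
    · intro m
      simp [map_sub, h0 m, hμ 1 m]
  · rintro ⟨σ, hσ⟩
    refine ⟨{ toFun := fun m => tm 1 m - σ m,
              map_add' := by intro x y; simp [map_add]; abel,
              map_smul' := by
                intro c m
                show tm 1 (c • m) - σ (c • m) = c • (tm 1 m - σ m)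
                rw [smul_sub, (tm 1).map_smul, ← algebraMap_smul B c m,
                    σ.map_smul, algebraMap_smul] }, ?_, ?_⟩
    · intro m
      simp [map_sub, hσ m, hμ 1 m]
    · intro b m
      have : σ (b • m) = b • σ m := σ.map_smul b m
      show tm 1 (b • m) - σ (b • m) = (tm 1 (b • m) - tm b m) + b • (tm 1 m - σ m)
      rw [this, smul_sub, htm_left b 1 m, mul_one]
      abel
end

section
/- Let R be a separable k-algebra with separability idempotent ζ(1) = Σ_l e_l ⊗ f_l ∈ R ⊗_k R. For any k-algebra B and B-R bimodules M, N, the map Φ sending a left B-linear map f : M → N to Φ(f) : m ↦ Σ_l f(m e_l) f_l is a B-R bilinear map, and Φ(f) = f whenever f is already B-R bilinear. Hence the forgetful functor from B-R bimodules to left B-modules is separable. -/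
/-!
Right multiplication by the separability idempotent averages a left `B`-linear map over the
right `R`-action. Right `R`-linearity of the average is the centrality relation
`Σ r e_l ⊗ f_l = Σ e_l ⊗ f_l r`, read through the `k`-bilinear map `x ⊗ y ↦ g (m x) y`;
the identity on bimodule maps is `Σ e_l f_l = 1`.
-/

open MulOpposite

section SeparabilityIdempotent

variable {k R : Type*} [CommRing k] [Ring R] [Algebra k R] {L : Type*} [Fintype L]

/-- `Φ(g) m = Σ_l g (m e_l) f_l`, written with the right `R`-actions as left `Rᵐᵒᵖ`-actions. -/
def separableAverage {M N : Type*} [SMul Rᵐᵒᵖ M] [AddCommMonoid N] [SMul Rᵐᵒᵖ N]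
    (e f : L → R) (g : M → N) (m : M) : N :=
  ∑ l, op (f l) • g (op (e l) • m)

theorem sum_bilin_mul_left_eq_sum_bilin_mul_right {P : Type*} [AddCommMonoid P] [Module k P]
    {e f : L → R} (hsep : ∀ r : R, ∑ l, (r * e l) ⊗ₜ[k] f l = ∑ l, e l ⊗ₜ[k] (f l * r))
    (φ : R →ₗ[k] R →ₗ[k] P) (r : R) :
    ∑ l, φ (r * e l) (f l) = ∑ l, φ (e l) (f l * r) := by
  simpa only [map_sum, TensorProduct.lift.tmul] using congrArg (TensorProduct.lift φ) (hsep r)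

variable {M N : Type*} [AddCommGroup M] [Module Rᵐᵒᵖ M] [AddCommGroup N] [Module Rᵐᵒᵖ N]

theorem separableAverage_smul {B : Type*} [Ring B] [Module B M] [Module B N]
    [SMulCommClass B Rᵐᵒᵖ M] [SMulCommClass B Rᵐᵒᵖ N] (e f : L → R) (g : M →ₗ[B] N)
    (b : B) (m : M) : separableAverage e f g (b • m) = b • separableAverage e f g m := by
  simp only [separableAverage, Finset.smul_sum, ← smul_comm b, map_smul]

def sandwichBilin [Module k M] [Module k N] [IsScalarTower k Rᵐᵒᵖ M] [IsScalarTower k Rᵐᵒᵖ N]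
    (g : M →ₗ[k] N) (m : M) : R →ₗ[k] R →ₗ[k] N :=
  LinearMap.mk₂ k (fun x y => op y • g (op x • m))
    (fun x₁ x₂ y => by rw [op_add, add_smul, map_add, smul_add])
    (fun c x y => by rw [op_smul, smul_assoc, map_smul, smul_comm c (op y)])
    (fun x y₁ y₂ => by rw [op_add, add_smul])
    (fun c x y => by rw [op_smul, smul_assoc])

theorem separableAverage_op_smul [Module k M] [Module k N] [IsScalarTower k Rᵐᵒᵖ M]
    [IsScalarTower k Rᵐᵒᵖ N] {e f : L → R}
    (hsep : ∀ r : R, ∑ l, (r * e l) ⊗ₜ[k] f l = ∑ l, e l ⊗ₜ[k] (f l * r))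
    (g : M →ₗ[k] N) (r : R) (m : M) :
    separableAverage e f g (op r • m) = op r • separableAverage e f g m :=
  calc ∑ l, op (f l) • g (op (e l) • op r • m)
      = ∑ l, sandwichBilin g m (r * e l) (f l) := by simp only [sandwichBilin,
        LinearMap.mk₂_apply, op_mul, mul_smul]
    _ = ∑ l, sandwichBilin g m (e l) (f l * r) :=
        sum_bilin_mul_left_eq_sum_bilin_mul_right hsep _ r
    _ = op r • ∑ l, op (f l) • g (op (e l) • m) := by
        simp only [sandwichBilin, LinearMap.mk₂_apply, op_mul, mul_smul, Finset.smul_sum]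

theorem separableAverage_eq_self {e f : L → R} (hsep : ∑ l, e l * f l = 1) {g : M → N}
    (hg : ∀ (r : R) (m : M), g (op r • m) = op r • g m) (m : M) :
    separableAverage e f g m = g m := by
  simp only [separableAverage, hg, smul_smul, ← op_mul, ← Finset.sum_smul, ← Finset.op_sum,
    hsep, op_one, one_smul]

end SeparabilityIdempotent

theorem separable_algebra_retraction
    {k R : Type*} [CommRing k] [Ring R] [Algebra k R]
    -- separability idempotent of R over k
    {L : Type*} [Fintype L] (e f : L → R)
    (hsep1 : ∀ r : R,
      ∑ l, (r * e l) ⊗ₜ[k] (f l) = ∑ l, (e l) ⊗ₜ[k] (f l * r))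
    (hsep2 : ∑ l, e l * f l = 1)
    -- B is any k-algebra; M, N are B-R bimodules
    {B : Type*} [Ring B] [Algebra k B]
    {M : Type*} [AddCommGroup M] [Module k M] [Module B M] [Module Rᵐᵒᵖ M]
    [IsScalarTower k B M] [IsScalarTower k Rᵐᵒᵖ M] [SMulCommClass B Rᵐᵒᵖ M]
    {N : Type*} [AddCommGroup N] [Module k N] [Module B N] [Module Rᵐᵒᵖ N]
    [IsScalarTower k B N] [IsScalarTower k Rᵐᵒᵖ N] [SMulCommClass B Rᵐᵒᵖ N]
    -- g is a left B-linear map M → N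
    (g : M →ₗ[B] N) :
    -- Φ(g) : m ↦ Σ_l g(m·e_l)·f_l is left B-linear …
    (∀ (b : B) (m : M),
      (∑ l, op (f l) • g (op (e l) • (b • m)))
        = b • ∑ l, op (f l) • g (op (e l) • m))
    -- … and right R-linear, i.e. Φ(g) is a B-R bimodule map …
    ∧ (∀ (r : R) (m : M),
      (∑ l, op (f l) • g (op (e l) • (op r • m)))
        = op r • ∑ l, op (f l) • g (op (e l) • m))
    -- … and Φ(g) = g whenever g is already right R-linear:
    ∧ ((∀ (r : R) (m : M), g (op r • m) = op r • g m) →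
      ∀ m : M, (∑ l, op (f l) • g (op (e l) • m)) = g m) :=
  ⟨separableAverage_smul e f g, separableAverage_op_smul hsep1 (g.restrictScalars k),
    fun hg => separableAverage_eq_self hsep2 hg⟩
end

section
/- Let (A, C, ψ)_R be a bijective right entwining structure with entwined extension B ⊆ A given by a grouplike element e ∈ C, and T ⊆ B a subalgebra. Suppose σ : A → B ⊗_T A is a left B-linear right C-colinear section of the multiplication map, B is flat as a right T-module, and f : A → B is a left T-linear retraction of the inclusion B ⊆ A. Then φ = μ_B ∘ (B ⊗_T f) ∘ σ : A → B is a left B-linear retraction of the inclusion B ⊆ A; hence B is a direct summand of A as a left B-module. -/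
/-!
`Φ = μ_B ∘ (B ⊗_T f)` is left `B`-linear, as it is so on the generators `b ⊗ a`; hence
`φ = Φ ∘ σ` is left `B`-linear with values in `B`, and `φ b = b · Φ (σ 1)`. Colinearity of `σ`
makes `σ 1` a coinvariant of `B ⊗_T A`, which by flatness lies in `B ⊗_T B`; there `Φ` agrees
with the multiplication map because `f` fixes `B`, so `Φ (σ 1) = μ (σ 1) = 1`.
-/

open MulOpposite

section TensorGenerators

variable {k A BA : Type*} [CommRing k] [Ring A] [Algebra k A] {B : Subalgebra k A}
  [AddCommGroup BA] [Module k BA] {tmBA : B →ₗ[k] A →ₗ[k] BA} {Φ : BA →ₗ[k] A} {f : A → B}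

theorem map_smul_of_map_tmul [Module B BA]
    (htmBA_left : ∀ (b b' : B) (a : A), b • tmBA b' a = tmBA (b * b') a)
    (hspanBA : ∀ x : BA, x ∈ Submodule.span k {y : BA | ∃ (b : B) (a : A), y = tmBA b a})
    (hΦ : ∀ (b : B) (a : A), Φ (tmBA b a) = (b : A) * (f a : A)) (b : B) (x : BA) :
    Φ (b • x) = (b : A) * Φ x := by
  -- The `B`- and `k`-actions on `BA` need not commute, so `k`-multiples of generators are
  -- absorbed into the generators rather than handled by a `smul` induction step.
  induction hspanBA x using Submodule.closure_induction with
  | zero => rw [smul_zero, map_zero, mul_zero]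
  | add u v _ _ hu hv => rw [smul_add, map_add, map_add, hu, hv, mul_add]
  | smul_mem c y hy =>
    obtain ⟨b', a, rfl⟩ := hy
    rw [← LinearMap.map_smul₂, htmBA_left, hΦ, hΦ, Subalgebra.coe_mul, mul_assoc]

theorem map_mem_of_map_tmul
    (hspanBA : ∀ x : BA, x ∈ Submodule.span k {y : BA | ∃ (b : B) (a : A), y = tmBA b a})
    (hΦ : ∀ (b : B) (a : A), Φ (tmBA b a) = (b : A) * (f a : A)) (x : BA) : Φ x ∈ B := by
  induction hspanBA x using Submodule.span_induction with
  | mem y hy =>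
    obtain ⟨b, a, rfl⟩ := hy
    exact hΦ b a ▸ mul_mem b.2 (f a).2
  | zero => exact (map_zero Φ).symm ▸ B.zero_mem
  | add u v _ _ hu hv => exact (map_add Φ u v).symm ▸ add_mem hu hv
  | smul c y _ hy => exact (map_smul Φ c y).symm ▸ B.smul_mem hy c

theorem map_eq_of_mem_span_tmul_subalgebra {μBA : BA →ₗ[k] A}
    (hμBA : ∀ (b : B) (a : A), μBA (tmBA b a) = (b : A) * a)
    (hf_retr : ∀ b : B, f (b : A) = b)
    (hΦ : ∀ (b : B) (a : A), Φ (tmBA b a) = (b : A) * (f a : A)) {x : BA}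
    (hx : x ∈ Submodule.span k {y : BA | ∃ (b : B) (a : A), a ∈ B ∧ y = tmBA b a}) :
    Φ x = μBA x := by
  refine LinearMap.eqOn_span' ?_ hx
  rintro - ⟨b, a, ha, rfl⟩
  rw [hΦ, hμBA, hf_retr ⟨a, ha⟩]

end TensorGenerators

theorem section_gives_B_linear_retraction_general
    {k : Type*} [CommRing k]
    {A : Type*} [Ring A] [Algebra k A]
    {C : Type*} [AddCommGroup C] [Module k C]
    {AC : Type*} [AddCommGroup AC] [Module k AC]
    (tmAC : A →ₗ[k] C →ₗ[k] AC)
    (ψ : C →ₗ[k] A →ₗ[k] AC)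
    (hent2 : ∀ c : C, ψ c 1 = tmAC 1 c)
    -- the grouplike element giving the coaction ρ(a) = ψ(e ⊗ a)
    (e : C)
    -- B is the coinvariant subalgebra and T ⊆ B
    (B : Subalgebra k A)
    -- BA = B ⊗_T A
    {BA : Type*} [AddCommGroup BA] [Module k BA] [Module B BA]
    (tmBA : B →ₗ[k] A →ₗ[k] BA)
    (htmBA_left : ∀ (b b' : B) (a : A), b • tmBA b' a = tmBA (b * b') a)
    (hspanBA : ∀ x : BA,
      x ∈ Submodule.span k {y : BA | ∃ (b : B) (a : A), y = tmBA b a})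
    -- the coaction B ⊗ ρ on B ⊗_T A, in BAC = B ⊗_T A ⊗_R C
    {BAC : Type*} [AddCommGroup BAC] [Module k BAC]
    (ext : BA →ₗ[k] C →ₗ[k] BAC)
    (ρBA : BA →ₗ[k] BAC)
    -- consequence of the flatness of B as a right T-module: the coinvariants
    -- of B ⊗_T A are B ⊗_T B
    (hcoinv : ∀ x : BA, ρBA x = ext x e →
      x ∈ Submodule.span k
        {y : BA | ∃ (b : B) (a : A), a ∈ B ∧ y = tmBA b a})
    -- σ is a left B-linear right C-colinear section of the multiplication map
    (σ : A →ₗ[k] BA)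
    (hσB : ∀ (b : B) (a : A), σ ((b : A) * a) = b • σ a)
    (μBA : BA →ₗ[k] A)
    (hμBA : ∀ (b : B) (a : A), μBA (tmBA b a) = (b : A) * a)
    (hσ_section : ∀ a : A, μBA (σ a) = a)
    (σC : AC →ₗ[k] BAC)
    (hσC : ∀ (a : A) (c : C), σC (tmAC a c) = ext (σ a) c)
    (hσ_colin : ∀ a : A, ρBA (σ a) = σC (ψ e a))
    -- f : A → B is a left T-linear retraction of the inclusion B ⊆ A
    (f : A → B)
    (hf_retr : ∀ b : B, f (b : A) = b)
    -- Φ = μ_B ∘ (B ⊗_T f) : B ⊗_T A → A (with image in B)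
    (Φ : BA →ₗ[k] A)
    (hΦ : ∀ (b : B) (a : A), Φ (tmBA b a) = (b : A) * (f a : A)) :
    -- then φ = Φ ∘ σ is a left B-linear retraction of B ⊆ A with values in B:
    (∀ (b : B) (a : A), Φ (σ ((b : A) * a)) = (b : A) * Φ (σ a))
    ∧ (∀ a : A, Φ (σ a) ∈ B)
    ∧ (∀ b : B, Φ (σ (b : A)) = (b : A)) := by
  have hΦ_smul := map_smul_of_map_tmul htmBA_left hspanBA hΦ
  have hσ_one_coinv : ρBA (σ 1) = ext (σ 1) e := by rw [hσ_colin, hent2, hσC]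
  have hΦσ_one : Φ (σ 1) = 1 := by
    rw [map_eq_of_mem_span_tmul_subalgebra hμBA hf_retr hΦ (hcoinv _ hσ_one_coinv),
      hσ_section]
  refine ⟨fun b a => by rw [hσB, hΦ_smul], fun a => map_mem_of_map_tmul hspanBA hΦ (σ a),
    fun b => ?_⟩
  rw [← mul_one (b : A), hσB, hΦ_smul, hΦσ_one]

theorem section_gives_B_linear_retraction
    {k R : Type*} [CommRing k] [Ring R] [Algebra k R]
    {A : Type*} [Ring A] [Algebra k A] (ηA : R →ₐ[k] A)
    {C : Type*} [AddCommGroup C] [Module k C] [Module R C] [Module Rᵐᵒᵖ C]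
    [IsScalarTower k R C] [IsScalarTower k Rᵐᵒᵖ C] [SMulCommClass R Rᵐᵒᵖ C]
    {CC : Type*} [AddCommGroup CC] [Module k CC]
    (tm : C →ₗ[k] C →ₗ[k] CC)
    (htm_bal : ∀ (r : R) (c c' : C), tm (op r • c) c' = tm c (r • c'))
    (Δ : C →ₗ[k] CC) (ε : C →ₗ[k] R)
    {AC : Type*} [AddCommGroup AC] [Module k AC] [Module A AC]
    (tmAC : A →ₗ[k] C →ₗ[k] AC)
    (htmAC_bal : ∀ (a : A) (r : R) (c : C), tmAC (a * ηA r) c = tmAC a (r • c))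
    (htmAC_left : ∀ (a a' : A) (c : C), a • tmAC a' c = tmAC (a * a') c)
    (ψ : C →ₗ[k] A →ₗ[k] AC)
    (hψ_bal : ∀ (r : R) (c : C) (a : A), ψ (op r • c) a = ψ c (ηA r * a))
    (hent2 : ∀ c : C, ψ c 1 = tmAC 1 c)
    -- the grouplike element giving the coaction ρ(a) = ψ(e ⊗ a)
    (e : C) (he1 : Δ e = tm e e) (he2 : ε e = 1)
    -- B is the coinvariant subalgebra and T ⊆ B
    (B : Subalgebra k A)
    (hB : ∀ x : A, x ∈ B ↔ ψ e x = tmAC x e)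
    (T : Subalgebra k A) (hTB : T ≤ B)
    -- BA = B ⊗_T A
    {BA : Type*} [AddCommGroup BA] [Module k BA] [Module B BA]
    (tmBA : B →ₗ[k] A →ₗ[k] BA)
    (htmBA_bal : ∀ (b : B) (t : T) (a : A),
      tmBA (b * ⟨(t : A), hTB t.2⟩) a = tmBA b ((t : A) * a))
    (htmBA_left : ∀ (b b' : B) (a : A), b • tmBA b' a = tmBA (b * b') a)
    (hspanBA : ∀ x : BA,
      x ∈ Submodule.span k {y : BA | ∃ (b : B) (a : A), y = tmBA b a})
    -- the coaction B ⊗ ρ on B ⊗_T A, in BAC = B ⊗_T A ⊗_R C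
    {BAC : Type*} [AddCommGroup BAC] [Module k BAC]
    (t3 : B →ₗ[k] A →ₗ[k] C →ₗ[k] BAC)
    (comb : B →ₗ[k] AC →ₗ[k] BAC)
    (hcomb : ∀ (b : B) (a : A) (c : C), comb b (tmAC a c) = t3 b a c)
    (ext : BA →ₗ[k] C →ₗ[k] BAC)
    (hext : ∀ (b : B) (a : A) (c : C), ext (tmBA b a) c = t3 b a c)
    (ρBA : BA →ₗ[k] BAC)
    (hρBA : ∀ (b : B) (a : A), ρBA (tmBA b a) = comb b (ψ e a))
    -- consequence of the flatness of B as a right T-module: the coinvariants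
    -- of B ⊗_T A are B ⊗_T B
    (hcoinv : ∀ x : BA, ρBA x = ext x e →
      x ∈ Submodule.span k
        {y : BA | ∃ (b : B) (a : A), a ∈ B ∧ y = tmBA b a})
    -- σ is a left B-linear right C-colinear section of the multiplication map
    (σ : A →ₗ[k] BA)
    (hσB : ∀ (b : B) (a : A), σ ((b : A) * a) = b • σ a)
    (μBA : BA →ₗ[k] A)
    (hμBA : ∀ (b : B) (a : A), μBA (tmBA b a) = (b : A) * a)
    (hσ_section : ∀ a : A, μBA (σ a) = a)
    (σC : AC →ₗ[k] BAC)
    (hσC : ∀ (a : A) (c : C), σC (tmAC a c) = ext (σ a) c)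
    (hσ_colin : ∀ a : A, ρBA (σ a) = σC (ψ e a))
    -- f : A → B is a left T-linear retraction of the inclusion B ⊆ A
    (f : A → B)
    (hf_add : ∀ a a' : A, f (a + a') = f a + f a')
    (hf_T : ∀ (t : T) (a : A), f ((t : A) * a) = ⟨(t : A), hTB t.2⟩ * f a)
    (hf_retr : ∀ b : B, f (b : A) = b)
    -- Φ = μ_B ∘ (B ⊗_T f) : B ⊗_T A → A (with image in B)
    (Φ : BA →ₗ[k] A)
    (hΦ : ∀ (b : B) (a : A), Φ (tmBA b a) = (b : A) * (f a : A)) :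
    -- then φ = Φ ∘ σ is a left B-linear retraction of B ⊆ A with values in B:
    (∀ (b : B) (a : A), Φ (σ ((b : A) * a)) = (b : A) * Φ (σ a))
    ∧ (∀ a : A, Φ (σ a) ∈ B)
    ∧ (∀ b : B, Φ (σ (b : A)) = (b : A)) :=
  section_gives_B_linear_retraction_general tmAC ψ hent2 e B tmBA htmBA_left hspanBA ext ρBA hcoinv
    σ hσB μBA hμBA hσ_section σC hσC hσ_colin f hf_retr Φ hΦ
end
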